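/- arXiv:1806.03794 — 4 statements merged into one kernel-verified Lean document; each statement's English description precedes it below -/
import Mathlib

section
/- Let f, g : ℝ^n → ℝ^p be maps with f(0) = g(0) = 0 that are differentiable at 0. Suppose there exist r > 0, L ≥ 1 and a map φ : B(0,r) → ℝ^n with φ(0) = 0 such that (1/L)·‖x − y‖ ≤ ‖φ(x) − φ(y)‖ ≤ L·‖x − y‖ for all x, y ∈ B(0,r), and f(φ(x)) = g(x) for all x ∈ B(0,r). Then the rank of the derivative Df(0) : ℝ^n → ℝ^p equals the rank of Dg(0) : ℝ^n → ℝ^p. -/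
/-!
Write `A = Df(0)` and `B = Dg(0)`. Since `f ∘ φ = g` near `0` and `φ x = O(x)`, `A (φ x) - B x = o(x)`,
and we show `range A = range B` by testing against linear functionals `ℓ`. If `ℓ ∘ A = 0`, then
`ℓ ∘ B` is a linear map that is `o(x)`, hence zero. If `ℓ ∘ B = 0`, then `ℓ (A (φ x)) = o(x)`, so for
small `t` the image `φ (B̄(0,t))` lies in `t • S_ε` with `S_ε = B̄(0,C) ∩ {|ℓ ∘ A| ≤ ε}`. As `φ⁻¹` is
`L`-Lipschitz on that image, comparing `n`-dimensional Hausdorff measures `μ` (a Haar measure) and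
rescaling gives `μ B̄(0,1) ≤ L ^ n μ S_ε` for all `ε > 0`, while `μ S_ε → 0` unless `ℓ ∘ A = 0`,
because the slabs shrink into the null hyperplane `ker (ℓ ∘ A)`.
-/

open Metric Filter Asymptotics MeasureTheory Topology Set Module
open scoped NNReal ENNReal Pointwise

theorem le_hausdorffMeasure_image_of_dist_le_mul_dist {X Y : Type*}
    [MetricSpace X] [MeasurableSpace X] [BorelSpace X]
    [MetricSpace Y] [MeasurableSpace Y] [BorelSpace Y]
    {f : X → Y} {s : Set X} {K : ℝ≥0} (hf : ∀ x ∈ s, ∀ y ∈ s, dist x y ≤ K * dist (f x) (f y))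
    {d : ℝ} (hd : 0 ≤ d) : μH[d] s ≤ (K : ℝ≥0∞) ^ d * μH[d] (f '' s) := by
  rcases s.eq_empty_or_nonempty with rfl | ⟨x₀, -⟩
  · simp
  have : Nonempty X := ⟨x₀⟩
  have hinj : InjOn f s := fun x hx y hy hxy =>
    dist_le_zero.1 (by simpa [hxy] using hf x hx y hy)
  have hlip : LipschitzOnWith K (Function.invFunOn f s) (f '' s) := by
    refine LipschitzOnWith.of_dist_le_mul ?_
    rintro _ ⟨x, hx, rfl⟩ _ ⟨y, hy, rfl⟩
    rw [hinj.leftInvOn_invFunOn hx, hinj.leftInvOn_invFunOn hy]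
    exact hf x hx y hy
  simpa [hinj.leftInvOn_invFunOn.image_image] using hlip.hausdorffMeasure_image_le hd

theorem LinearMap.range_eq_range_of_forall_comp_eq_zero_iff {K V W : Type*} [Field K]
    [AddCommGroup V] [Module K V] [AddCommGroup W] [Module K W] (A B : V →ₗ[K] W)
    (h : ∀ ℓ : Dual K W, ℓ ∘ₗ A = 0 ↔ ℓ ∘ₗ B = 0) : range A = range B := by
  rw [← Subspace.dualAnnihilator_inj, ← ker_dualMap_eq_dualAnnihilator_range,
    ← ker_dualMap_eq_dualAnnihilator_range]
  ext ℓ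
  exact h ℓ

section

variable {E : Type*} [NormedAddCommGroup E] [NormedSpace ℝ E]

theorem tendsto_measure_inter_abs_le_nhdsGT_zero [FiniteDimensional ℝ E] [MeasurableSpace E]
    [BorelSpace E] (μ : Measure E) [μ.IsAddHaarMeasure] {ℓ : E →L[ℝ] ℝ} (hℓ : ℓ ≠ 0) {s : Set E}
    (hs : NullMeasurableSet s μ) (hμs : μ s ≠ ∞) :
    Tendsto (fun ε => μ (s ∩ {z | |ℓ z| ≤ ε})) (𝓝[>] 0) (𝓝 0) := by
  have hker : μ (LinearMap.ker (ℓ : E →ₗ[ℝ] ℝ)) = 0 := by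
    refine Measure.addHaar_submodule μ _ fun htop => hℓ ?_
    ext x
    exact LinearMap.congr_fun (LinearMap.ker_eq_top.1 htop) x
  have hinter : ⋂ ε > (0 : ℝ), s ∩ {z | |ℓ z| ≤ ε} ⊆ LinearMap.ker (ℓ : E →ₗ[ℝ] ℝ) := by
    intro z hz
    simp only [mem_iInter, mem_inter_iff, mem_ofPred_eq] at hz
    exact abs_nonpos_iff.1 (le_of_forall_pos_le_add fun ε hε => by simpa using (hz ε hε).2)
  have := tendsto_measure_biInter_gt (μ := μ) (s := fun ε => s ∩ {z | |ℓ z| ≤ ε}) (a := (0 : ℝ))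
    (fun ε _ => hs.inter (measurableSet_le (by fun_prop) measurable_const).nullMeasurableSet)
    (fun i j _ hij => inter_subset_inter_right _ fun z hz => le_trans hz hij)
    ⟨1, one_pos, ne_top_of_le_ne_top hμs (measure_mono inter_subset_left)⟩
  rwa [measure_mono_null hinter hker] at this

theorem hausdorffMeasure_closedBall_one_le_of_image_subset_smul [FiniteDimensional ℝ E]
    [MeasurableSpace E] [BorelSpace E] {φ : E → E} {K : ℝ≥0} {t : ℝ} (ht : 0 < t) {S : Set E}
    (hanti : ∀ x ∈ closedBall (0 : E) t, ∀ y ∈ closedBall (0 : E) t,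
      dist x y ≤ K * dist (φ x) (φ y))
    (hS : φ '' closedBall 0 t ⊆ t • S) :
    μH[finrank ℝ E] (closedBall (0 : E) 1) ≤ (K : ℝ≥0∞) ^ finrank ℝ E * μH[finrank ℝ E] S := by
  have htn : ENNReal.ofReal (t ^ finrank ℝ E) ≠ 0 := by simp [ht]
  refine (ENNReal.mul_le_mul_iff_right htn ENNReal.ofReal_ne_top).1 ?_
  calc ENNReal.ofReal (t ^ finrank ℝ E) * μH[finrank ℝ E] (closedBall (0 : E) 1)
      = μH[finrank ℝ E] (closedBall (0 : E) t) := (Measure.addHaar_closedBall' _ 0 ht.le).symm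
    _ ≤ (K : ℝ≥0∞) ^ finrank ℝ E * μH[finrank ℝ E] (φ '' closedBall 0 t) := by
      simpa using le_hausdorffMeasure_image_of_dist_le_mul_dist hanti (Nat.cast_nonneg _)
    _ ≤ (K : ℝ≥0∞) ^ finrank ℝ E * μH[finrank ℝ E] (t • S) := by gcongr
    _ = ENNReal.ofReal (t ^ finrank ℝ E) * ((K : ℝ≥0∞) ^ finrank ℝ E * μH[finrank ℝ E] S) := by
      rw [Measure.addHaar_smul, abs_of_pos (pow_pos ht _), mul_left_comm]

theorem ContinuousLinearMap.eq_zero_of_isLittleO_comp_biLipschitz [FiniteDimensional ℝ E]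
    {φ : E → E} {s : Set E} {K : ℝ≥0} (hs : s ∈ 𝓝 0)
    (hanti : ∀ x ∈ s, ∀ y ∈ s, dist x y ≤ K * dist (φ x) (φ y)) (hφ : φ =O[𝓝 0] fun x => x)
    {ℓ : E →L[ℝ] ℝ} (hℓ : (fun x => ℓ (φ x)) =o[𝓝 0] fun x => x) : ℓ = 0 := by
  by_contra hℓ0
  let _ : MeasurableSpace E := borel E
  have : BorelSpace E := ⟨rfl⟩
  obtain ⟨C, hC0, hC⟩ := hφ.exists_pos
  have hslab (ε : ℝ) (hε : 0 < ε) : μH[finrank ℝ E] (closedBall (0 : E) 1) ≤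
      (K : ℝ≥0∞) ^ finrank ℝ E * μH[finrank ℝ E] (closedBall 0 C ∩ {z | |ℓ z| ≤ ε}) := by
    obtain ⟨δ, hδ, hball⟩ := Metric.eventually_nhds_iff_ball.1 <|
      (show ∀ᶠ x in 𝓝 0, x ∈ s from hs).and (hC.bound.and (hℓ.bound hε))
    have ht : 0 < δ / 2 := half_pos hδ
    have hsub : closedBall (0 : E) (δ / 2) ⊆ ball 0 δ := closedBall_subset_ball (half_lt_self hδ)
    refine hausdorffMeasure_closedBall_one_le_of_image_subset_smul ht
      (fun x hx y hy => hanti x (hball x (hsub hx)).1 y (hball y (hsub hy)).1) ?_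
    rintro _ ⟨x, hx, rfl⟩
    obtain ⟨-, hφx, hℓx⟩ := hball x (hsub hx)
    have hxt : ‖x‖ ≤ δ / 2 := mem_closedBall_zero_iff.1 hx
    rw [mem_smul_set_iff_inv_smul_mem₀ ht.ne']
    refine ⟨?_, ?_⟩
    · rw [mem_closedBall_zero_iff, norm_smul, norm_inv, Real.norm_of_nonneg ht.le,
        inv_mul_le_iff₀ ht]
      exact hφx.trans (by rw [mul_comm]; gcongr)
    · rw [mem_ofPred_eq, map_smul, smul_eq_mul, abs_mul, abs_inv, abs_of_pos ht,
        inv_mul_le_iff₀ ht]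
      exact hℓx.trans (by rw [mul_comm]; gcongr)
  have hlim : Tendsto
      (fun ε => (K : ℝ≥0∞) ^ finrank ℝ E * μH[finrank ℝ E] (closedBall 0 C ∩ {z | |ℓ z| ≤ ε}))
      (𝓝[>] 0) (𝓝 0) := by
    simpa using ENNReal.Tendsto.const_mul (tendsto_measure_inter_abs_le_nhdsGT_zero _ hℓ0
      measurableSet_closedBall.nullMeasurableSet measure_closedBall_lt_top.ne)
      (Or.inr (ENNReal.pow_ne_top ENNReal.coe_ne_top))
  exact (measure_closedBall_pos _ 0 one_pos).ne'
    (nonpos_iff_eq_zero.1 (ge_of_tendsto hlim (eventually_nhdsWithin_of_forall hslab)))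

variable {F : Type*} [NormedAddCommGroup F] [NormedSpace ℝ F]

theorem HasFDerivAt.isLittleO_comp_sub {f g : E → F} {A B : E →L[ℝ] F} {φ : E → E}
    (hf : HasFDerivAt f A 0) (hg : HasFDerivAt g B 0) (hφ : φ =O[𝓝 0] fun x => x)
    (heq : f ∘ φ =ᶠ[𝓝 0] g) : (fun x => A (φ x) - B x) =o[𝓝 0] fun x => x := by
  have hφ0 : φ 0 = 0 := by
    obtain ⟨c, hc⟩ := hφ.bound
    simpa using hc.self_of_nhds
  have hfφ := ((hasFDerivAt_iff_isLittleO_nhds_zero.1 hf).comp_tendsto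
    (hφ.trans_tendsto tendsto_id)).trans_isBigO hφ
  have hfg0 : f 0 = g 0 := by simpa [hφ0] using heq.eq_of_nhds
  refine ((hasFDerivAt_iff_isLittleO_nhds_zero.1 hg).sub hfφ).congr' ?_ (by simp)
  filter_upwards [heq] with x hx
  simp [← hx, hfg0]

theorem ContinuousLinearMap.eq_zero_of_isLittleO (T : E →L[ℝ] F)
    (hT : (fun x => T x) =o[𝓝 0] fun x => x) : T = 0 :=
  (T.hasFDerivAt (x := 0)).unique (hasFDerivAt_iff_isLittleO_nhds_zero.2 (by simpa using hT))

theorem ContinuousLinearMap.range_eq_range_of_isLittleO_comp_sub [FiniteDimensional ℝ E]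
    [FiniteDimensional ℝ F] {A B : E →L[ℝ] F} {φ : E → E} {s : Set E} {K : ℝ≥0} (hs : s ∈ 𝓝 0)
    (hanti : ∀ x ∈ s, ∀ y ∈ s, dist x y ≤ K * dist (φ x) (φ y)) (hφ : φ =O[𝓝 0] fun x => x)
    (h : (fun x => A (φ x) - B x) =o[𝓝 0] fun x => x) :
    LinearMap.range (A : E →ₗ[ℝ] F) = LinearMap.range (B : E →ₗ[ℝ] F) := by
  refine LinearMap.range_eq_range_of_forall_comp_eq_zero_iff _ _ fun ℓ => ?_
  set ℓc : F →L[ℝ] ℝ := LinearMap.toContinuousLinearMap ℓ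
  have hcomp (T : E →L[ℝ] F) : ℓ ∘ₗ (T : E →ₗ[ℝ] F) = 0 ↔ ℓc.comp T = 0 := by
    simp only [LinearMap.ext_iff, ContinuousLinearMap.ext_iff]
    rfl
  have hℓ : (fun x => ℓc (A (φ x)) - ℓc (B x)) =o[𝓝 0] fun x => x := by
    simpa using (ℓc.isBigO_comp _ _).trans_isLittleO h
  rw [hcomp, hcomp]
  constructor
  · intro hA
    refine eq_zero_of_isLittleO _ ?_
    simpa [← ContinuousLinearMap.comp_apply, hA] using hℓ.neg_left
  · intro hB
    refine eq_zero_of_isLittleO_comp_biLipschitz hs hanti hφ ?_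
    simpa [← ContinuousLinearMap.comp_apply, hB] using hℓ

end

theorem rank_biLipschitz_invariant_general (n p : ℕ)
    (f g : EuclideanSpace ℝ (Fin n) → EuclideanSpace ℝ (Fin p))
    (hfd : DifferentiableAt ℝ f 0) (hgd : DifferentiableAt ℝ g 0)
    (r L : ℝ) (hr : 0 < r) (hL : 1 ≤ L)
    (φ : EuclideanSpace ℝ (Fin n) → EuclideanSpace ℝ (Fin n))
    (hφ0 : φ 0 = 0)
    (hbl : ∀ x ∈ ball (0 : EuclideanSpace ℝ (Fin n)) r,
      ∀ y ∈ ball (0 : EuclideanSpace ℝ (Fin n)) r,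
        (1 / L) * ‖x - y‖ ≤ ‖φ x - φ y‖ ∧ ‖φ x - φ y‖ ≤ L * ‖x - y‖)
    (heq : ∀ x ∈ ball (0 : EuclideanSpace ℝ (Fin n)) r, f (φ x) = g x) :
    Module.finrank ℝ (LinearMap.range (fderiv ℝ f 0 : EuclideanSpace ℝ (Fin n) →ₗ[ℝ] EuclideanSpace ℝ (Fin p))) =
      Module.finrank ℝ (LinearMap.range (fderiv ℝ g 0 : EuclideanSpace ℝ (Fin n) →ₗ[ℝ] EuclideanSpace ℝ (Fin p))) := by
  have hL0 : 0 < L := one_pos.trans_le hL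
  have hball : ball (0 : EuclideanSpace ℝ (Fin n)) r ∈ 𝓝 0 := ball_mem_nhds 0 hr
  have hφ : φ =O[𝓝 0] fun x => x := IsBigO.of_bound L <| eventually_of_mem hball fun x hx => by
    simpa [hφ0] using (hbl x hx 0 (mem_ball_self hr)).2
  have hanti : ∀ x ∈ ball (0 : EuclideanSpace ℝ (Fin n)) r, ∀ y ∈ ball 0 r,
      dist x y ≤ L.toNNReal * dist (φ x) (φ y) := fun x hx y hy => by
    rw [Real.coe_toNNReal _ hL0.le, dist_eq_norm, dist_eq_norm, ← inv_mul_le_iff₀ hL0]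
    simpa using (hbl x hx y hy).1
  have hlo := hfd.hasFDerivAt.isLittleO_comp_sub hgd.hasFDerivAt hφ (eventually_of_mem hball heq)
  rw [ContinuousLinearMap.range_eq_range_of_isLittleO_comp_sub hball hanti hφ hlo]

/-- The rank of the derivative at 0 is invariant under bi-Lipschitz right equivalence. -/
theorem rank_biLipschitz_invariant (n p : ℕ)
    (f g : EuclideanSpace ℝ (Fin n) → EuclideanSpace ℝ (Fin p))
    (hf0 : f 0 = 0) (hg0 : g 0 = 0)
    (hfd : DifferentiableAt ℝ f 0) (hgd : DifferentiableAt ℝ g 0)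
    (r L : ℝ) (hr : 0 < r) (hL : 1 ≤ L)
    (φ : EuclideanSpace ℝ (Fin n) → EuclideanSpace ℝ (Fin n))
    (hφ0 : φ 0 = 0)
    (hbl : ∀ x ∈ ball (0 : EuclideanSpace ℝ (Fin n)) r,
      ∀ y ∈ ball (0 : EuclideanSpace ℝ (Fin n)) r,
        (1 / L) * ‖x - y‖ ≤ ‖φ x - φ y‖ ∧ ‖φ x - φ y‖ ≤ L * ‖x - y‖)
    (heq : ∀ x ∈ ball (0 : EuclideanSpace ℝ (Fin n)) r, f (φ x) = g x) :
    Module.finrank ℝ (LinearMap.range (fderiv ℝ f 0 : EuclideanSpace ℝ (Fin n) →ₗ[ℝ] EuclideanSpace ℝ (Fin p))) =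
      Module.finrank ℝ (LinearMap.range (fderiv ℝ g 0 : EuclideanSpace ℝ (Fin n) →ₗ[ℝ] EuclideanSpace ℝ (Fin p))) :=
  rank_biLipschitz_invariant_general n p f g hfd hgd r L hr hL φ hφ0 hbl heq
end

section
/- Fix an integer p ≥ 0 and λ ∈ ℂ with 1 + 2λ³ ≠ 0 and 1 − 2λ³ ≠ 0. Define ξ : ℂ × ℂ × ℂ^p → ℂ by ξ(u,v,w) = u³ − 3λ²uv⁴ + v⁶ + w_1² + ⋯ + w_p². Fix δ > 1 and σ > 0 and let Ω = { x = (u,v,w) : ξ(x) ≠ 0, δ^{-1}‖x‖·‖Dξ(x)‖ ≤ |ξ(x)| ≤ δ‖x‖·‖Dξ(x)‖, and |ξ(x)| ≤ σ‖x‖⁶ }. If (x_m) is a sequence of points of Ω with x_m → 0 and x_m ≠ 0 such that the unit vectors x_m/‖x_m‖ converge to a vector μ = (a, b, c) ∈ ℂ × ℂ × ℂ^p, then a = 0 and c = 0. -/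
open Metric Filter

/-- `ξ(u,v,w) = u³ − 3λ²uv⁴ + v⁶ + w₁² + ⋯ + w_p²` on `ℂ^{2+p}`, where `u = x 0`,
`v = x 1` and `w j = x (j+2)`. -/
noncomputable def xiJ10 (p : ℕ) (lam : ℂ) (x : EuclideanSpace ℂ (Fin (p + 2))) : ℂ :=
  (x 0) ^ 3 - 3 * lam ^ 2 * (x 0) * (x 1) ^ 4 + (x 1) ^ 6 +
    ∑ j : Fin p, (x j.succ.succ) ^ 2

/-- The region `Ω = V^δ(ξ) ∩ W^σ(ξ,6)`. -/
noncomputable def omegaJ10 (p : ℕ) (lam : ℂ) (δ σ : ℝ) :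
    Set (EuclideanSpace ℂ (Fin (p + 2))) :=
  {x | xiJ10 p lam x ≠ 0 ∧
    δ⁻¹ * (‖x‖ * ‖fderiv ℂ (xiJ10 p lam) x‖) ≤ ‖xiJ10 p lam x‖ ∧
    ‖xiJ10 p lam x‖ ≤ δ * (‖x‖ * ‖fderiv ℂ (xiJ10 p lam) x‖) ∧
    ‖xiJ10 p lam x‖ ≤ σ * ‖x‖ ^ 6}

/-!
On `Ω` the two inequalities `δ⁻¹‖x‖‖Dξ(x)‖ ≤ |ξ(x)| ≤ σ‖x‖⁶` give `‖Dξ(x)‖ ≤ δσ‖x‖⁵`.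
Along the sequence this makes `∂ξ/∂w_j = 2w_j` and `∂ξ/∂u = 3u² − 3λ²v⁴` of order `‖x‖⁵`,
so `w_j = O(‖x‖⁵)` and, as `|v| ≤ ‖x‖`, `u² = O(‖x‖⁴)`. Both coordinates are therefore
`o(‖x‖)`, and a coordinate that is `o(‖x‖)` along the sequence vanishes on its limiting
direction.
-/

open Asymptotics EuclideanSpace

theorem ContinuousLinearMap.map_direction_eq_zero_of_isLittleO {α E F : Type*}
    [NormedAddCommGroup E] [NormedSpace ℝ E] [NormedAddCommGroup F] [NormedSpace ℝ F]
    {l : Filter α} [l.NeBot] {x : α → E} {μ : E}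
    (hμ : Tendsto (fun m => ‖x m‖⁻¹ • x m) l (nhds μ)) (φ : E →L[ℝ] F)
    (hφ : (fun m => φ (x m)) =o[l] fun m => ‖x m‖) : φ μ = 0 := by
  have hlim : Tendsto (fun m => ‖φ (‖x m‖⁻¹ • x m)‖) l (nhds ‖φ μ‖) :=
    ((φ.continuous.tendsto μ).comp hμ).norm
  have hzero : Tendsto (fun m => ‖φ (‖x m‖⁻¹ • x m)‖) l (nhds 0) := by
    simpa [norm_smul, div_eq_inv_mul] using hφ.norm_left.tendsto_div_nhds_zero
  exact norm_eq_zero.mp (tendsto_nhds_unique hlim hzero)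

theorem norm_apply_single_le_opNorm {ι 𝕜 F : Type*} [Fintype ι] [DecidableEq ι] [RCLike 𝕜]
    [NormedAddCommGroup F] [NormedSpace 𝕜 F] (L : EuclideanSpace 𝕜 ι →L[𝕜] F) (i : ι) :
    ‖L (single i 1)‖ ≤ ‖L‖ := by
  simpa using L.le_opNorm (single i 1)

section XiJ10

variable {p : ℕ} {lam : ℂ}

theorem hasFDerivAt_xiJ10 (x : EuclideanSpace ℂ (Fin (p + 2))) :
    HasFDerivAt (xiJ10 p lam)
      ((3 * x 0 ^ 2 - 3 * lam ^ 2 * x 1 ^ 4) • proj (𝕜 := ℂ) 0 +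
        (6 * x 1 ^ 5 - 12 * lam ^ 2 * x 0 * x 1 ^ 3) • proj (𝕜 := ℂ) 1 +
        ∑ j : Fin p, (2 * x j.succ.succ) • proj (𝕜 := ℂ) j.succ.succ) x := by
  have hc (i : Fin (p + 2)) : HasFDerivAt (fun y : EuclideanSpace ℂ (Fin (p + 2)) => y i)
      (proj (𝕜 := ℂ) i) x :=
    (proj (𝕜 := ℂ) i).hasFDerivAt
  have h := ((((hc 0).pow 3).sub (((hc 0).const_mul (3 * lam ^ 2)).mul ((hc 1).pow 4))).add
    ((hc 1).pow 6)).add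
    (HasFDerivAt.fun_sum (u := Finset.univ) fun (j : Fin p) _ => (hc j.succ.succ).pow 2)
  refine (h.congr_of_eventuallyEq (f₁ := xiJ10 p lam) (.of_forall fun _ => rfl)).congr_fderiv ?_
  ext
  simp only [Nat.add_one_sub_one, nsmul_eq_mul, Nat.cast_ofNat, pow_one, add_apply, sub_apply,
    smul_apply, PiLp.proj_apply, smul_eq_mul, sum_apply, add_left_inj]
  ring

theorem fderiv_xiJ10_single_zero (x : EuclideanSpace ℂ (Fin (p + 2))) :
    fderiv ℂ (xiJ10 p lam) x (single 0 1) = 3 * x 0 ^ 2 - 3 * lam ^ 2 * x 1 ^ 4 := by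
  simp [(hasFDerivAt_xiJ10 x).fderiv]

theorem fderiv_xiJ10_single_succ_succ (x : EuclideanSpace ℂ (Fin (p + 2))) (j : Fin p) :
    fderiv ℂ (xiJ10 p lam) x (single j.succ.succ 1) = 2 * x j.succ.succ := by
  simp [(hasFDerivAt_xiJ10 x).fderiv, (Fin.succ_succ_ne_one j).symm]

theorem norm_fderiv_xiJ10_le_of_mem_omegaJ10 {δ σ : ℝ} {x : EuclideanSpace ℂ (Fin (p + 2))}
    (hδ : 0 < δ) (hx : x ∈ omegaJ10 p lam δ σ) (hx0 : x ≠ 0) :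
    ‖fderiv ℂ (xiJ10 p lam) x‖ ≤ δ * σ * ‖x‖ ^ 5 := by
  obtain ⟨-, hlow, -, hup⟩ := hx
  have hr : 0 < ‖x‖ := norm_pos_iff.mpr hx0
  refine le_of_mul_le_mul_left ?_ hr
  calc ‖x‖ * ‖fderiv ℂ (xiJ10 p lam) x‖
      = δ * (δ⁻¹ * (‖x‖ * ‖fderiv ℂ (xiJ10 p lam) x‖)) := by field_simp
    _ ≤ δ * (σ * ‖x‖ ^ 6) := mul_le_mul_of_nonneg_left (hlow.trans hup) hδ.le
    _ = ‖x‖ * (δ * σ * ‖x‖ ^ 5) := by ring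

section Sequence

variable {α : Type*} {l : Filter α} {x : α → EuclideanSpace ℂ (Fin (p + 2))}

theorem isBigO_fderiv_xiJ10_of_mem_omegaJ10 {δ σ : ℝ} (hδ : 0 < δ)
    (hxΩ : ∀ m, x m ∈ omegaJ10 p lam δ σ) (hxne : ∀ m, x m ≠ 0) :
    (fun m => fderiv ℂ (xiJ10 p lam) (x m)) =O[l] fun m => ‖x m‖ ^ 5 :=
  .of_bound (δ * σ) (.of_forall fun m => by
    simpa using norm_fderiv_xiJ10_le_of_mem_omegaJ10 hδ (hxΩ m) (hxne m))

theorem isBigO_fderiv_xiJ10_single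
    (hD : (fun m => fderiv ℂ (xiJ10 p lam) (x m)) =O[l] fun m => ‖x m‖ ^ 5) (i : Fin (p + 2)) :
    (fun m => fderiv ℂ (xiJ10 p lam) (x m) (single i 1)) =O[l] fun m => ‖x m‖ ^ 5 :=
  (isBigO_of_le _ fun _ => norm_apply_single_le_opNorm _ i).trans hD

theorem isLittleO_apply_zero_of_isBigO_fderiv_xiJ10 (hr : Tendsto (fun m => ‖x m‖) l (nhds 0))
    (hD : (fun m => fderiv ℂ (xiJ10 p lam) (x m)) =O[l] fun m => ‖x m‖ ^ 5) :
    (fun m => x m 0) =o[l] fun m => ‖x m‖ := by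
  have hv : (fun m => lam ^ 2 * x m 1 ^ 4) =O[l] fun m => ‖x m‖ ^ 4 :=
    .of_bound (‖lam‖ ^ 2) (.of_forall fun m => by
      simp only [norm_mul, norm_pow, norm_norm]
      gcongr
      exact PiLp.norm_apply_le (x m) 1)
  have hu2 : (fun m => x m 0 ^ 2) =O[l] fun m => ‖x m‖ ^ 4 := by
    have h := ((isBigO_fderiv_xiJ10_single hD 0).trans
      ((isLittleO_pow_pow (𝕜 := ℝ) (by norm_num : 4 < 5)).comp_tendsto hr).isBigO).const_mul_left
      3⁻¹
    simp only [fderiv_xiJ10_single_zero] at h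
    exact (h.add hv).congr_left fun m => by ring
  have hu : (fun m => x m 0) =O[l] fun m => ‖x m‖ ^ 2 :=
    .of_pow two_ne_zero (by simpa only [Pi.pow_def, ← pow_mul] using hu2)
  simpa only [Function.comp_def, pow_one] using hu.trans_isLittleO
    ((isLittleO_pow_pow (𝕜 := ℝ) (by norm_num : 1 < 2)).comp_tendsto hr)

theorem isLittleO_apply_succ_succ_of_isBigO_fderiv_xiJ10
    (hr : Tendsto (fun m => ‖x m‖) l (nhds 0))
    (hD : (fun m => fderiv ℂ (xiJ10 p lam) (x m)) =O[l] fun m => ‖x m‖ ^ 5) (j : Fin p) :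
    (fun m => x m j.succ.succ) =o[l] fun m => ‖x m‖ := by
  have hw := isBigO_fderiv_xiJ10_single hD j.succ.succ
  simp only [fderiv_xiJ10_single_succ_succ, isBigO_const_mul_left_iff (two_ne_zero' ℂ)] at hw
  simpa only [Function.comp_def, pow_one] using hw.trans_isLittleO
    ((isLittleO_pow_pow (𝕜 := ℝ) (by norm_num : 1 < 5)).comp_tendsto hr)

end Sequence

end XiJ10

theorem tangent_cone_omega_subset_v_axis_general (p : ℕ) (lam : ℂ)
    (δ σ : ℝ) (hδ : 1 < δ)
    (x : ℕ → EuclideanSpace ℂ (Fin (p + 2)))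
    (hxΩ : ∀ m, x m ∈ omegaJ10 p lam δ σ)
    (hxne : ∀ m, x m ≠ 0)
    (hx0 : Tendsto x atTop (nhds 0))
    (μ : EuclideanSpace ℂ (Fin (p + 2)))
    (hμ : Tendsto (fun m => (‖x m‖)⁻¹ • x m) atTop (nhds μ)) :
    μ 0 = 0 ∧ ∀ j : Fin p, μ j.succ.succ = 0 := by
  have hr : Tendsto (fun m => ‖x m‖) atTop (nhds 0) := by simpa using hx0.norm
  have hD := isBigO_fderiv_xiJ10_of_mem_omegaJ10 (l := atTop) (by linarith) hxΩ hxne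
  have hcoord (i : Fin (p + 2)) (h : (fun m => x m i) =o[atTop] fun m => ‖x m‖) : μ i = 0 :=
    ((proj (𝕜 := ℂ) i).restrictScalars ℝ).map_direction_eq_zero_of_isLittleO hμ h
  exact ⟨hcoord 0 (isLittleO_apply_zero_of_isBigO_fderiv_xiJ10 hr hD),
    fun j => hcoord _ (isLittleO_apply_succ_succ_of_isBigO_fderiv_xiJ10 hr hD j)⟩

/-- The tangent cone at `0` of `Ω` is contained in the `v`-axis. -/
theorem tangent_cone_omega_subset_v_axis (p : ℕ) (lam : ℂ)
    (h₁ : 1 + 2 * lam ^ 3 ≠ 0) (h₂ : 1 - 2 * lam ^ 3 ≠ 0)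
    (δ σ : ℝ) (hδ : 1 < δ) (hσ : 0 < σ)
    (x : ℕ → EuclideanSpace ℂ (Fin (p + 2)))
    (hxΩ : ∀ m, x m ∈ omegaJ10 p lam δ σ)
    (hxne : ∀ m, x m ≠ 0)
    (hx0 : Tendsto x atTop (nhds 0))
    (μ : EuclideanSpace ℂ (Fin (p + 2)))
    (hμ : Tendsto (fun m => (‖x m‖)⁻¹ • x m) atTop (nhds μ)) :
    μ 0 = 0 ∧ ∀ j : Fin p, μ j.succ.succ = 0 :=
  tangent_cone_omega_subset_v_axis_general p lam δ σ hδ x hxΩ hxne hx0 μ hμ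
end

section
/- Let F : ℝ^n × ℝ → ℝ be continuously differentiable, and let X : ℝ^n × ℝ → ℝ^n be a continuous map for which there is a constant C > 0 with ‖X(x_1, t) − X(x_2, t)‖ ≤ C·‖x_1 − x_2‖ for all x_1, x_2 ∈ ℝ^n and all t ∈ ℝ. Suppose that ∂F/∂t(x,t) + Σ_{i=1}^n X_i(x,t)·∂F/∂x_i(x,t) = 0 for all (x,t) ∈ ℝ^n × ℝ. Then for every t ∈ ℝ there exists a bijection φ_t : ℝ^n → ℝ^n such that both φ_t and φ_t^{-1} are Lipschitz and F(φ_t(x), t) = F(x, 0) for all x ∈ ℝ^n. -/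
/-!
By Picard–Lindelöf, the field `X` (globally Lipschitz in `x`) can be integrated from any initial
point over any time interval short compared with `sup ‖X(0, ·)‖` and the Lipschitz constant. Along
such an integral curve `t ↦ (γ t, t)` the function `F` is constant, since the field annihilates it;
the flow maps between two times are mutually inverse by uniqueness of solutions, and Lipschitz by
Grönwall's inequality (for the backward flow, applied to the time-reversed field). Hence
bi-Lipschitz right-equivalence of the slices `F(·, t)`, an equivalence relation, holds between
nearby times, and by connectedness of `ℝ` between any two times.
-/

open Set Filter Topology NNReal Real

section BiLipschitz

variable {α β : Type*} [PseudoEMetricSpace α]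

def BiLipschitzRightEquiv (f g : α → β) : Prop :=
  ∃ φ ψ : α → α, (∀ x, ψ (φ x) = x) ∧ (∀ x, φ (ψ x) = x) ∧
    (∃ K : ℝ≥0, LipschitzWith K φ) ∧ (∃ K : ℝ≥0, LipschitzWith K ψ) ∧ ∀ x, g (φ x) = f x

namespace BiLipschitzRightEquiv

theorem symm {f g : α → β} (h : BiLipschitzRightEquiv f g) : BiLipschitzRightEquiv g f := by
  obtain ⟨φ, ψ, hψφ, hφψ, hφ, hψ, hgf⟩ := h
  exact ⟨ψ, φ, hφψ, hψφ, hψ, hφ, fun y ↦ by rw [← hgf, hφψ]⟩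

theorem trans {f g h : α → β} (hfg : BiLipschitzRightEquiv f g)
    (hgh : BiLipschitzRightEquiv g h) : BiLipschitzRightEquiv f h := by
  obtain ⟨φ, ψ, hψφ, hφψ, ⟨K, hφ⟩, ⟨L, hψ⟩, hgf⟩ := hfg
  obtain ⟨φ', ψ', hψφ', hφψ', ⟨K', hφ'⟩, ⟨L', hψ'⟩, hhg⟩ := hgh
  exact ⟨φ' ∘ φ, ψ ∘ ψ', fun x ↦ by simp [hψφ', hψφ], fun x ↦ by simp [hφψ, hφψ'],
    ⟨K' * K, hφ'.comp hφ⟩, ⟨L * L', hψ.comp hψ'⟩, fun x ↦ by simp [hhg, hgf]⟩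

end BiLipschitzRightEquiv

end BiLipschitz

section IntegralCurve

variable {E : Type*} [NormedAddCommGroup E] [NormedSpace ℝ E]
  {γ : ℝ → E} {v : ℝ → E → E} {K : ℝ≥0} {a b t : ℝ}

theorem IsIntegralCurveOn.hasDerivWithinAt_Ici (hγ : IsIntegralCurveOn γ v (Icc a b))
    (ht : t ∈ Ico a b) : HasDerivWithinAt γ (v t (γ t)) (Ici t) t :=
  (hγ t (Ico_subset_Icc_self ht)).mono_of_mem_nhdsWithin (Icc_mem_nhdsGE_of_mem ht)

theorem IsIntegralCurveOn.hasDerivWithinAt_Iic (hγ : IsIntegralCurveOn γ v (Icc a b))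
    (ht : t ∈ Ioc a b) : HasDerivWithinAt γ (v t (γ t)) (Iic t) t :=
  (hγ t (Ioc_subset_Icc_self ht)).mono_of_mem_nhdsWithin (Icc_mem_nhdsLE_of_mem ht)

theorem IsIntegralCurveOn.comp_neg (hγ : IsIntegralCurveOn γ v (Icc a b)) :
    IsIntegralCurveOn (fun t ↦ γ (-t)) (fun t x ↦ -v (-t) x) (Icc (-b) (-a)) := by
  have h := hγ.comp_mul (-1)
  have hs : {t : ℝ | t * -1 ∈ Icc a b} = Icc (-b) (-a) := by
    ext t
    simp only [mul_neg_one, mem_ofPred_eq, mem_Icc]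
    constructor <;> intro h <;> constructor <;> linarith [h.1, h.2]
  rw [hs] at h
  simp only [Function.comp_def, mul_neg_one, neg_smul, one_smul] at h
  exact h

theorem IsIntegralCurveOn.apply_eq_apply_of_fderiv_apply_eq_zero {G : Type*}
    [NormedAddCommGroup G] [NormedSpace ℝ G] {F : E × ℝ → G} (hF : Differentiable ℝ F)
    (hFv : ∀ x t, fderiv ℝ F (x, t) (v t x, 1) = 0) (hγ : IsIntegralCurveOn γ v (Icc a b))
    (hab : a ≤ b) : F (γ b, b) = F (γ a, a) := by
  refine constant_of_has_deriv_right_zero (f := fun t ↦ F (γ t, t))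
    (hF.continuous.comp_continuousOn (hγ.continuousOn.prodMk continuousOn_id))
    (fun t ht ↦ ?_) b ⟨hab, le_rfl⟩
  rw [← hFv (γ t) t]
  exact (hF (γ t, t)).hasFDerivAt.comp_hasDerivWithinAt (f := fun t ↦ (γ t, t)) t
    ((hγ.hasDerivWithinAt_Ici ht).prodMk (hasDerivWithinAt_id t _))

variable (hv : ∀ t, LipschitzWith K (v t))
include hv

theorem lipschitzWith_flow_right {f : E → ℝ → E} (hf : ∀ x, IsIntegralCurveOn (f x) v (Icc a b))
    (hfa : ∀ x, f x a = x) (hab : a ≤ b) :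
    LipschitzWith (exp (K * (b - a))).toNNReal (fun x ↦ f x b) :=
  .of_dist_le' fun x y ↦ by
    rw [mul_comm]
    exact dist_le_of_trajectories_ODE hv (hf x).continuousOn (fun _ ↦ (hf x).hasDerivWithinAt_Ici)
      (hf y).continuousOn (fun _ ↦ (hf y).hasDerivWithinAt_Ici) (by rw [hfa, hfa]) b ⟨hab, le_rfl⟩

theorem lipschitzWith_flow_left {g : E → ℝ → E} (hg : ∀ y, IsIntegralCurveOn (g y) v (Icc a b))
    (hgb : ∀ y, g y b = y) (hab : a ≤ b) :
    LipschitzWith (exp (K * (b - a))).toNNReal (fun y ↦ g y a) := by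
  have hv' : ∀ t, LipschitzWith K (fun x ↦ -v (-t) x) := fun t ↦ (hv (-t)).neg
  simpa [neg_add_eq_sub] using
    lipschitzWith_flow_right hv' (fun y ↦ (hg y).comp_neg) (by simp [hgb]) (neg_le_neg hab)

theorem flow_left_flow_right {f g : E → ℝ → E} (hf : ∀ x, IsIntegralCurveOn (f x) v (Icc a b))
    (hfa : ∀ x, f x a = x) (hg : ∀ y, IsIntegralCurveOn (g y) v (Icc a b))
    (hgb : ∀ y, g y b = y) (hab : a ≤ b) (x : E) : g (f x b) a = x := by
  have := ODE_solution_unique_of_mem_Icc_left (s := fun _ ↦ univ)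
    (fun t _ ↦ (hv t).lipschitzOnWith)
    (hf x).continuousOn (fun _ ↦ (hf x).hasDerivWithinAt_Iic) (fun _ _ ↦ trivial)
    (hg _).continuousOn (fun _ ↦ (hg _).hasDerivWithinAt_Iic) (fun _ _ ↦ trivial) (hgb _).symm
    ⟨le_rfl, hab⟩
  rw [← this, hfa]

theorem flow_right_flow_left {f g : E → ℝ → E} (hf : ∀ x, IsIntegralCurveOn (f x) v (Icc a b))
    (hfa : ∀ x, f x a = x) (hg : ∀ y, IsIntegralCurveOn (g y) v (Icc a b))
    (hgb : ∀ y, g y b = y) (hab : a ≤ b) (y : E) : f (g y a) b = y := by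
  have := ODE_solution_unique_of_mem_Icc_right (s := fun _ ↦ univ)
    (fun t _ ↦ (hv t).lipschitzOnWith)
    (hf _).continuousOn (fun _ ↦ (hf _).hasDerivWithinAt_Ici) (fun _ _ ↦ trivial)
    (hg y).continuousOn (fun _ ↦ (hg y).hasDerivWithinAt_Ici) (fun _ _ ↦ trivial) (hfa _)
    ⟨hab, le_rfl⟩
  rw [this, hgb]

theorem exists_isIntegralCurveOn_Icc [CompleteSpace E]
    (hvc : ∀ x, Continuous (v · x)) {M : ℝ} (hM : ∀ t ∈ Icc a b, ‖v t 0‖ ≤ M)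
    (hlen : (b - a) * (M + 2 * K) ≤ 1 / 2) {t₀ : ℝ} (ht₀ : t₀ ∈ Icc a b) (x₀ : E) :
    ∃ γ : ℝ → E, γ t₀ = x₀ ∧ IsIntegralCurveOn γ v (Icc a b) := by
  have hM₀ : 0 ≤ M := (norm_nonneg _).trans (hM t₀ ht₀)
  -- on the ball of radius `‖x₀‖ + 1` about `x₀`, the field is bounded by `M + K (2‖x₀‖ + 1)`
  have hL : 0 ≤ M + K * (2 * ‖x₀‖ + 1) := by positivity
  refine IsPicardLindelof.exists_eq_forall_mem_Icc_hasDerivWithinAt₀ (t₀ := ⟨t₀, ht₀⟩)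
    (a := ⟨‖x₀‖ + 1, by positivity⟩) (L := ⟨_, hL⟩) (K := K)
    ⟨fun t _ ↦ (hv t).lipschitzOnWith, fun x _ ↦ (hvc x).continuousOn, fun t ht x hx ↦ ?_, ?_⟩
  · have hx : ‖x - x₀‖ ≤ ‖x₀‖ + 1 := mem_closedBall_iff_norm.mp hx
    calc ‖v t x‖ ≤ ‖v t x - v t 0‖ + ‖v t 0‖ := norm_le_norm_sub_add _ _
      _ ≤ K * ‖x‖ + M := by
        gcongr
        · simpa using (hv t).norm_sub_le x 0
        · exact hM t ht
      _ ≤ K * (‖x - x₀‖ + ‖x₀‖) + M := by gcongr; exact norm_le_norm_sub_add x x₀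
      _ ≤ M + K * (2 * ‖x₀‖ + 1) := by nlinarith [K.2]
  · have hmax : max (b - t₀) (t₀ - a) ≤ b - a :=
      max_le (by linarith [ht₀.1]) (by linarith [ht₀.2])
    show (M + K * (2 * ‖x₀‖ + 1)) * max (b - t₀) (t₀ - a) ≤ ‖x₀‖ + 1 - 0
    have hd : 0 ≤ b - a := by linarith [ht₀.1, ht₀.2]
    have hdK : (b - a) * K * ‖x₀‖ ≤ ‖x₀‖ / 4 := by
      have : (b - a) * K ≤ 1 / 4 := by nlinarith [mul_nonneg hd hM₀]
      nlinarith [norm_nonneg x₀]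
    calc (M + K * (2 * ‖x₀‖ + 1)) * max (b - t₀) (t₀ - a)
        ≤ (M + K * (2 * ‖x₀‖ + 1)) * (b - a) := mul_le_mul_of_nonneg_left hmax hL
      _ ≤ ‖x₀‖ + 1 - 0 := by nlinarith [norm_nonneg x₀, mul_nonneg hd K.2]

theorem biLipschitzRightEquiv_of_forall_exists_isIntegralCurveOn {G : Type*}
    [NormedAddCommGroup G] [NormedSpace ℝ G] {F : E × ℝ → G} (hF : Differentiable ℝ F)
    (hFv : ∀ x t, fderiv ℝ F (x, t) (v t x, 1) = 0) (hab : a ≤ b)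
    (hsol : ∀ t₀ ∈ Icc a b, ∀ x₀ : E, ∃ γ : ℝ → E, γ t₀ = x₀ ∧ IsIntegralCurveOn γ v (Icc a b)) :
    BiLipschitzRightEquiv (fun x ↦ F (x, a)) (fun x ↦ F (x, b)) := by
  choose f hfa hf using hsol a ⟨le_rfl, hab⟩
  choose g hgb hg using hsol b ⟨hab, le_rfl⟩
  exact ⟨fun x ↦ f x b, fun y ↦ g y a, flow_left_flow_right hv hf hfa hg hgb hab,
    flow_right_flow_left hv hf hfa hg hgb hab, ⟨_, lipschitzWith_flow_right hv hf hfa hab⟩,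
    ⟨_, lipschitzWith_flow_left hv hg hgb hab⟩, fun x ↦ by
      simpa [hfa] using (hf x).apply_eq_apply_of_fderiv_apply_eq_zero hF hFv hab⟩

theorem eventually_biLipschitzRightEquiv [CompleteSpace E] {G : Type*}
    [NormedAddCommGroup G] [NormedSpace ℝ G] {F : E × ℝ → G} (hF : Differentiable ℝ F)
    (hFv : ∀ x t, fderiv ℝ F (x, t) (v t x, 1) = 0) (hvc : ∀ x, Continuous (v · x)) (p : ℝ) :
    ∀ᶠ q in 𝓝 p, BiLipschitzRightEquiv (fun x ↦ F (x, p)) (fun x ↦ F (x, q)) := by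
  obtain ⟨M, hM⟩ := isCompact_Icc.exists_bound_of_continuousOn (s := Icc (p - 1) (p + 1))
    (hvc 0).continuousOn
  have hshort : ∀ a b, a ≤ b → Icc a b ⊆ Icc (p - 1) (p + 1) → (b - a) * (M + 2 * K) ≤ 1 / 2 →
      BiLipschitzRightEquiv (fun x ↦ F (x, a)) (fun x ↦ F (x, b)) := fun a b hab hsub hlen ↦
    biLipschitzRightEquiv_of_forall_exists_isIntegralCurveOn hv hF hFv hab fun _ ht₀ x₀ ↦
      exists_isIntegralCurveOn_Icc hv hvc (fun t ht ↦ hM t (hsub ht)) hlen ht₀ x₀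
  have hlim : Tendsto (fun q ↦ |q - p| * (M + 2 * K)) (𝓝 p) (𝓝 0) :=
    Continuous.tendsto' (by fun_prop) p 0 (by simp)
  filter_upwards [Icc_mem_nhds (sub_one_lt p) (lt_add_one p),
    hlim.eventually_lt_const (by norm_num : (0 : ℝ) < 1 / 2)] with q hq hlen
  rcases le_total p q with hpq | hqp
  · rw [abs_of_nonneg (sub_nonneg.2 hpq)] at hlen
    exact hshort p q hpq (Icc_subset_Icc (by linarith) hq.2) hlen.le
  · rw [abs_sub_comm, abs_of_nonneg (sub_nonneg.2 hqp)] at hlen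
    exact (hshort q p hqp (Icc_subset_Icc hq.1 (by linarith)) hlen.le).symm

theorem biLipschitzRightEquiv_slices [CompleteSpace E] {G : Type*}
    [NormedAddCommGroup G] [NormedSpace ℝ G] {F : E × ℝ → G} (hF : Differentiable ℝ F)
    (hFv : ∀ x t, fderiv ℝ F (x, t) (v t x, 1) = 0) (hvc : ∀ x, Continuous (v · x)) (a b : ℝ) :
    BiLipschitzRightEquiv (fun x ↦ F (x, a)) (fun x ↦ F (x, b)) :=
  PreconnectedSpace.induction₂'
    (fun a b ↦ BiLipschitzRightEquiv (fun x ↦ F (x, a)) (fun x ↦ F (x, b)))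
    (fun p ↦ (eventually_biLipschitzRightEquiv hv hF hFv hvc p).mono fun _ h ↦ ⟨h, h.symm⟩)
    ⟨fun _ _ _ ↦ BiLipschitzRightEquiv.trans⟩ a b

end IntegralCurve

theorem thom_levine_biLipschitz_trivial_general (n : ℕ)
    (F : EuclideanSpace ℝ (Fin n) × ℝ → ℝ) (hF : ContDiff ℝ 1 F)
    (X : EuclideanSpace ℝ (Fin n) × ℝ → EuclideanSpace ℝ (Fin n))
    (hXc : Continuous X)
    (C : ℝ)
    (hXl : ∀ x₁ x₂ : EuclideanSpace ℝ (Fin n), ∀ t : ℝ,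
      ‖X (x₁, t) - X (x₂, t)‖ ≤ C * ‖x₁ - x₂‖)
    (hann : ∀ x : EuclideanSpace ℝ (Fin n), ∀ t : ℝ,
      fderiv ℝ F (x, t) (X (x, t), 1) = 0) :
    ∀ t : ℝ, ∃ φ ψ : EuclideanSpace ℝ (Fin n) → EuclideanSpace ℝ (Fin n),
      (∀ x, ψ (φ x) = x) ∧ (∀ x, φ (ψ x) = x) ∧
      (∃ K : NNReal, LipschitzWith K φ) ∧ (∃ K : NNReal, LipschitzWith K ψ) ∧
      ∀ x, F (φ x, t) = F (x, 0) :=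
  biLipschitzRightEquiv_slices (v := fun t x ↦ X (x, t))
    (fun t ↦ .of_dist_le' fun x y ↦ by simpa only [dist_eq_norm] using hXl x y t)
    (hF.differentiable one_ne_zero) hann
    (fun x ↦ hXc.comp (continuous_const.prodMk continuous_id)) 0

/-- The Thom–Levine criterion: a continuous vector field `∂/∂t + Σ Xᵢ ∂/∂xᵢ`,
Lipschitz in `x`, annihilating `F`, yields bi-Lipschitz triviality of the
deformation `F`. -/
theorem thom_levine_biLipschitz_trivial (n : ℕ)
    (F : EuclideanSpace ℝ (Fin n) × ℝ → ℝ) (hF : ContDiff ℝ 1 F)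
    (X : EuclideanSpace ℝ (Fin n) × ℝ → EuclideanSpace ℝ (Fin n))
    (hXc : Continuous X)
    (C : ℝ) (hC : 0 < C)
    (hXl : ∀ x₁ x₂ : EuclideanSpace ℝ (Fin n), ∀ t : ℝ,
      ‖X (x₁, t) - X (x₂, t)‖ ≤ C * ‖x₁ - x₂‖)
    (hann : ∀ x : EuclideanSpace ℝ (Fin n), ∀ t : ℝ,
      fderiv ℝ F (x, t) (X (x, t), 1) = 0) :
    ∀ t : ℝ, ∃ φ ψ : EuclideanSpace ℝ (Fin n) → EuclideanSpace ℝ (Fin n),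
      (∀ x, ψ (φ x) = x) ∧ (∀ x, φ (ψ x) = x) ∧
      (∃ K : NNReal, LipschitzWith K φ) ∧ (∃ K : NNReal, LipschitzWith K ψ) ∧
      ∀ x, F (φ x, t) = F (x, 0) :=
  thom_levine_biLipschitz_trivial_general n F hF X hXc C hXl hann
end

section
/- Let w_1, …, w_n and k be positive integers and define ρ_k : ℂ^n → ℝ by ρ_k(x) = |x_1|^{2k/w_1} + ⋯ + |x_n|^{2k/w_n}. Let T ⊂ ℂ be a nonempty compact set and let f : T × ℂ^n → ℂ be continuous such that for every t ∈ T: (i) f(t, s^{w_1}x_1, …, s^{w_n}x_n) = s^{2k}·f(t, x) for all real s > 0 and all x ∈ ℂ^n, and (ii) f(t, x) = 0 if and only if x = 0. Then there exist constants 0 < C_1 ≤ C_2, independent of t, such that C_1·ρ_k(x) ≤ |f(t, x)| ≤ C_2·ρ_k(x) for all t ∈ T and all x ∈ ℂ^n. -/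
/-!
The weighted dilation `δ_s x = (s^{w₁} x₁, …, s^{wₙ} xₙ)` multiplies both `|f(t, ·)|` and `ρ_k` by
`s^{2k}`, so `|f(t, x)| / ρ_k(x)` is invariant under dilations. Every `x ≠ 0` is dilated onto the
quasi-sphere `{ρ_k = 1}`, which is compact, and there the continuous function `|f|` is bounded
above and, because `f` vanishes only at the origin, below by a positive constant on `T × {ρ_k = 1}`.
-/

open Set

theorem IsCompact.exists_pos_lower_upper_bound {β : Type*} [TopologicalSpace β] {K : Set β}
    (hK : IsCompact K) {F : β → ℝ} (hF : ContinuousOn F K) (hpos : ∀ q ∈ K, 0 < F q) :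
    ∃ C₁ C₂ : ℝ, 0 < C₁ ∧ C₁ ≤ C₂ ∧ ∀ q ∈ K, C₁ ≤ F q ∧ F q ≤ C₂ := by
  obtain ⟨C₁, hC₁, hlower⟩ := hK.exists_forall_le' hF hpos
  obtain ⟨M, hM⟩ := hK.bddAbove_image hF
  exact ⟨C₁, max C₁ M, hC₁, le_max_left _ _, fun q hq =>
    ⟨hlower q hq, (hM (mem_image_of_mem F hq)).trans (le_max_right _ _)⟩⟩

namespace Quasihomogeneous

variable {ι : Type*} [Fintype ι] (w : ι → ℕ) (k : ℕ)

noncomputable def controlFunction (x : EuclideanSpace ℂ ι) : ℝ :=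
  ∑ i, ‖x i‖ ^ ((2 * k : ℝ) / (w i : ℝ))

def weightedDilation (s : ℝ) (x : EuclideanSpace ℂ ι) : EuclideanSpace ℂ ι :=
  WithLp.toLp 2 fun i => (s : ℂ) ^ w i * x i

variable {w k}

theorem continuous_controlFunction : Continuous (controlFunction (ι := ι) w k) :=
  continuous_finsetSum _ fun i _ =>
    (continuous_norm.comp (EuclideanSpace.proj i).continuous).rpow_const fun _ =>
      Or.inr (by positivity)

theorem controlFunction_zero (hw : ∀ i, 0 < w i) (hk : 0 < k) :
    controlFunction w k (0 : EuclideanSpace ℂ ι) = 0 :=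
  Finset.sum_eq_zero fun i _ => by
    simp only [PiLp.zero_apply, norm_zero]
    exact Real.zero_rpow (by have := hw i; positivity)

theorem controlFunction_pos {x : EuclideanSpace ℂ ι} (hx : x ≠ 0) : 0 < controlFunction w k x := by
  obtain ⟨i, hi⟩ : ∃ i, x i ≠ 0 := by
    by_contra! h
    exact hx (PiLp.ext h)
  exact Finset.sum_pos' (fun j _ => by positivity)
    ⟨i, Finset.mem_univ i, Real.rpow_pos_of_pos (norm_pos_iff.mpr hi) _⟩

theorem controlFunction_weightedDilation (hw : ∀ i, 0 < w i) {s : ℝ} (hs : 0 < s)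
    (x : EuclideanSpace ℂ ι) :
    controlFunction w k (weightedDilation w s x) = s ^ (2 * k) * controlFunction w k x := by
  rw [controlFunction, controlFunction, Finset.mul_sum]
  refine Finset.sum_congr rfl fun i _ => ?_
  have hwi : (w i : ℝ) ≠ 0 := by have := hw i; positivity
  rw [weightedDilation, PiLp.toLp_apply, norm_mul, norm_pow, Complex.norm_real,
    Real.norm_of_nonneg hs.le, Real.mul_rpow (by positivity) (norm_nonneg _),
    ← Real.rpow_natCast s (w i), ← Real.rpow_mul hs.le, mul_div_cancel₀ _ hwi]
  norm_cast

theorem isCompact_controlFunction_eq_one (hw : ∀ i, 0 < w i) (hk : 0 < k) :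
    IsCompact {x : EuclideanSpace ℂ ι | controlFunction w k x = 1} := by
  have hcube : IsCompact (WithLp.toLp 2 '' univ.pi fun _ : ι => Metric.closedBall (0 : ℂ) 1) :=
    (isCompact_univ_pi fun _ => isCompact_closedBall 0 1).image (PiLp.continuous_toLp 2 _)
  refine hcube.of_isClosed_subset (isClosed_eq continuous_controlFunction continuous_const)
    fun x hx => ⟨WithLp.ofLp x, fun i _ => ?_, rfl⟩
  have hterm : ‖x i‖ ^ ((2 * k : ℝ) / (w i : ℝ)) ≤ 1 :=
    (Finset.single_le_sum (fun j _ => by positivity) (Finset.mem_univ i)).trans_eq hx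
  have hexp : 0 < (2 * k : ℝ) / (w i : ℝ) := by have := hw i; positivity
  rw [mem_closedBall_zero_iff]
  exact (Real.rpow_le_rpow_iff (norm_nonneg _) zero_le_one hexp).mp
    (hterm.trans_eq (Real.one_rpow _).symm)

end Quasihomogeneous

open Quasihomogeneous

theorem quasihomogeneous_comparable_to_control_general (n : ℕ) (w : Fin n → ℕ)
    (hw : ∀ i, 0 < w i) (k : ℕ) (hk : 0 < k)
    (T : Set ℂ) (hTcompact : IsCompact T)
    (f : ℂ → EuclideanSpace ℂ (Fin n) → ℂ)
    (hfc : ContinuousOn (fun q : ℂ × EuclideanSpace ℂ (Fin n) => f q.1 q.2)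
      (T ×ˢ (Set.univ : Set (EuclideanSpace ℂ (Fin n)))))
    (hquasi : ∀ t ∈ T, ∀ s : ℝ, 0 < s → ∀ x : EuclideanSpace ℂ (Fin n),
      f t (WithLp.toLp 2 (fun i => (s : ℂ) ^ (w i) * x i)) = (s : ℂ) ^ (2 * k) * f t x)
    (hzero : ∀ t ∈ T, ∀ x : EuclideanSpace ℂ (Fin n), f t x = 0 ↔ x = 0) :
    ∃ C₁ C₂ : ℝ, 0 < C₁ ∧ C₁ ≤ C₂ ∧ ∀ t ∈ T, ∀ x : EuclideanSpace ℂ (Fin n),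
      C₁ * (∑ i, ‖x i‖ ^ ((2 * k : ℝ) / (w i : ℝ))) ≤ ‖f t x‖ ∧
      ‖f t x‖ ≤ C₂ * (∑ i, ‖x i‖ ^ ((2 * k : ℝ) / (w i : ℝ))) := by
  have hsphere_pos : ∀ q ∈ T ×ˢ {x | controlFunction w k x = 1}, 0 < ‖f q.1 q.2‖ :=
    fun q hq => norm_pos_iff.2 fun h => by
      simp [(hzero q.1 hq.1 q.2).1 h, controlFunction_zero hw hk] at hq
  obtain ⟨C₁, C₂, hC₁, hC₁₂, hbound⟩ :=
    (hTcompact.prod (isCompact_controlFunction_eq_one hw hk)).exists_pos_lower_upper_bound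
      (continuous_norm.comp_continuousOn (hfc.mono (prod_mono_right (subset_univ _))))
      hsphere_pos
  refine ⟨C₁, C₂, hC₁, hC₁₂, fun t ht x => ?_⟩
  change C₁ * controlFunction w k x ≤ _ ∧ _ ≤ C₂ * controlFunction w k x
  rcases eq_or_ne x 0 with rfl | hx
  · simp [controlFunction_zero hw hk, (hzero t ht 0).2 rfl]
  set ρ := controlFunction w k x
  have hρ : 0 < ρ := controlFunction_pos hx
  set s := ρ⁻¹ ^ ((2 * k : ℕ)⁻¹ : ℝ)
  have hs : 0 < s := by positivity
  have hsρ : s ^ (2 * k) * ρ = 1 := by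
    rw [Real.rpow_inv_natCast_pow (by positivity) (by positivity), inv_mul_cancel₀ hρ.ne']
  have hy : controlFunction w k (weightedDilation w s x) = 1 := by
    rw [controlFunction_weightedDilation hw hs, hsρ]
  have hfx : ‖f t x‖ = ρ * ‖f t (weightedDilation w s x)‖ := by
    rw [weightedDilation, hquasi t ht s hs, norm_mul, norm_pow, Complex.norm_real,
      Real.norm_of_nonneg hs.le, ← mul_assoc, mul_comm ρ, hsρ, one_mul]
  obtain ⟨hlower, hupper⟩ := hbound (t, _) ⟨ht, hy⟩
  rw [hfx, mul_comm C₁, mul_comm C₂]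
  exact ⟨mul_le_mul_of_nonneg_left hlower hρ.le, mul_le_mul_of_nonneg_left hupper hρ.le⟩

/-- A continuous family of quasihomogeneous functions of type `(w₁,…,wₙ; 2k)` vanishing
only at the origin is comparable, uniformly over a compact parameter set, to the
standard control function `ρ_k(x) = Σᵢ |xᵢ|^{2k/wᵢ}`. -/
theorem quasihomogeneous_comparable_to_control (n : ℕ) (w : Fin n → ℕ)
    (hw : ∀ i, 0 < w i) (k : ℕ) (hk : 0 < k)
    (T : Set ℂ) (hTcompact : IsCompact T) (hTne : T.Nonempty)
    (f : ℂ → EuclideanSpace ℂ (Fin n) → ℂ)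
    (hfc : ContinuousOn (fun q : ℂ × EuclideanSpace ℂ (Fin n) => f q.1 q.2)
      (T ×ˢ (Set.univ : Set (EuclideanSpace ℂ (Fin n)))))
    (hquasi : ∀ t ∈ T, ∀ s : ℝ, 0 < s → ∀ x : EuclideanSpace ℂ (Fin n),
      f t (WithLp.toLp 2 (fun i => (s : ℂ) ^ (w i) * x i)) = (s : ℂ) ^ (2 * k) * f t x)
    (hzero : ∀ t ∈ T, ∀ x : EuclideanSpace ℂ (Fin n), f t x = 0 ↔ x = 0) :
    ∃ C₁ C₂ : ℝ, 0 < C₁ ∧ C₁ ≤ C₂ ∧ ∀ t ∈ T, ∀ x : EuclideanSpace ℂ (Fin n),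
      C₁ * (∑ i, ‖x i‖ ^ ((2 * k : ℝ) / (w i : ℝ))) ≤ ‖f t x‖ ∧
      ‖f t x‖ ≤ C₂ * (∑ i, ‖x i‖ ^ ((2 * k : ℝ) / (w i : ℝ))) :=
  quasihomogeneous_comparable_to_control_general n w hw k hk T hTcompact f hfc hquasi hzero
end
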